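/- Universal bounded ratio score: let S be a finite multiset of n ≥ 2 real numbers with variance σ²(S) > 0. Running the 1-D DLV algorithm on S with bounding variance β = 24·σ²(S)/n² outputs a partition of S into p consecutive blocks with p ≤ (3/4)n + 1/2 (so the partitioning is nontrivial), and the ratio score of this partition is at most 24/n. -/

import Mathlib

open scoped Classical

/-- Mean of a finite multiset of reals (0 for the empty multiset). -/
noncomputable def mmean (S : Multiset ℝ) : ℝ := S.sum / S.card

/-- Population variance of a finite multiset of reals (0 for the empty multiset). -/
noncomputable def mvar (S : Multiset ℝ) : ℝ :=
  ((S.map (fun x => (x - mmean S) ^ 2)).sum) / S.card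

/-- The multiset `S_n`: one copy of `-ω`, one copy of `ω`, and `n` copies of `ω + 3ω/n`. -/
noncomputable def Sn (ω : ℝ) (n : ℕ) : Multiset ℝ :=
  {-ω, ω} + Multiset.replicate n (ω + 3 * ω / n)

/-- One left-to-right scan of the 1-D DLV algorithm: `V` is the current block,
the list holds the remaining elements (in nondecreasing order). If adding the next
element would push the variance of the current block above `β`, the current block
is output and a new block is started. -/
noncomputable def dlvAux (β : ℝ) : Multiset ℝ → List ℝ → List (Multiset ℝ)
  | V, [] => [V]
  | V, x :: xs =>
      if β < mvar (x ::ₘ V) then V :: dlvAux β {x} xs else dlvAux β (x ::ₘ V) xs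

/-- The 1-D DLV algorithm run on a finite multiset `S` with bounding variance `β`:
sort the elements in nondecreasing order and scan left to right, starting from an
empty current block (after the first element the current block is `{x₁}`, since a
singleton has variance `0`). The output is the list of completed blocks. -/
noncomputable def dlv (β : ℝ) (S : Multiset ℝ) : List (Multiset ℝ) :=
  match S.sort (· ≤ ·) with
  | [] => []
  | x :: xs => dlvAux β {x} xs

/- ### auxiliary lemmas -/

lemma mvar_nonneg (S : Multiset ℝ) : 0 ≤ mvar S := by
  unfold mvar
  apply div_nonneg _ (by positivity)
  apply Multiset.sum_nonneg
  intro x hx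
  obtain ⟨y, _, rfl⟩ := Multiset.mem_map.1 hx
  positivity

lemma mvar_singleton (x : ℝ) : mvar {x} = 0 := by
  simp [mvar, mmean]

lemma dlvAux_sum (β : ℝ) : ∀ (xs : List ℝ) (V : Multiset ℝ),
    (dlvAux β V xs).sum = V + ↑xs := by
  intro xs
  induction xs with
  | nil => intro V; simp [dlvAux]
  | cons x xs ih =>
    intro V
    rw [dlvAux]
    split
    · simp only [List.sum_cons, ih, Multiset.singleton_add, ← Multiset.cons_coe]
    · rw [ih, ← Multiset.cons_coe, Multiset.cons_add, Multiset.add_cons]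

lemma dlvAux_blocks (β : ℝ) (hβ : 0 ≤ β) : ∀ (xs : List ℝ) (V : Multiset ℝ),
    V ≠ 0 → mvar V ≤ β → ∀ B ∈ dlvAux β V xs, B ≠ 0 ∧ mvar B ≤ β := by
  intro xs
  induction xs with
  | nil => intro V h1 h2 B hB; simp [dlvAux] at hB; subst hB; exact ⟨h1, h2⟩
  | cons x xs ih =>
    intro V h1 h2 B hB
    rw [dlvAux] at hB
    split at hB
    · rcases List.mem_cons.1 hB with rfl | hB
      · exact ⟨h1, h2⟩
      · exact ih {x} (by simp) (by rw [mvar_singleton]; exact hβ) B hB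
    · exact ih (x ::ₘ V) (by simp) (by linarith [not_lt.1 (by assumption : ¬ β < mvar (x ::ₘ V))]) B hB

lemma dlvAux_length_pos (β : ℝ) : ∀ (xs : List ℝ) (V : Multiset ℝ),
    1 ≤ (dlvAux β V xs).length := by
  intro xs
  induction xs with
  | nil => intro V; simp [dlvAux]
  | cons x xs ih =>
    intro V
    rw [dlvAux]
    split
    · simp
    · exact ih _

lemma sum_sq_dev (W : Multiset ℝ) (c : ℝ) :
    (W.map (fun w => (w - c)^2)).sum
      = (W.map (fun w => w^2)).sum - 2*c*W.sum + W.card * c^2 := by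
  induction W using Multiset.induction with
  | empty => simp
  | cons x W ih => simp [ih]; ring

lemma popoviciu (W : Multiset ℝ) (hW : W ≠ 0) (m M : ℝ)
    (h1 : ∀ w ∈ W, m ≤ w) (h2 : ∀ w ∈ W, w ≤ M) :
    mvar W ≤ ((M - m)/2)^2 := by
  have hcard : (0:ℝ) < (W.card : ℝ) := by
    have := Multiset.card_pos.2 hW
    exact_mod_cast this
  set μ := mmean W with hμ
  have hsum : W.sum = (W.card : ℝ) * μ := by
    rw [hμ]; unfold mmean; field_simp
  set c := (m + M)/2 with hc
  have key1 : (W.map (fun w => (w - μ)^2)).sum ≤ (W.map (fun w => (w - c)^2)).sum := by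
    rw [sum_sq_dev, sum_sq_dev, hsum]
    nlinarith [sq_nonneg (μ - c), hcard]
  have key2 : (W.map (fun w => (w - c)^2)).sum ≤ (W.card : ℝ) * ((M - m)/2)^2 := by
    have h : (W.map (fun w => (w - c)^2)).sum ≤ (W.map (fun _ => ((M - m)/2)^2)).sum := by
      apply Multiset.sum_map_le_sum_map
      intro w hw
      have := h1 w hw; have := h2 w hw
      rw [hc]
      nlinarith
    simpa [Multiset.map_const', mul_comm] using h
  unfold mvar
  rw [div_le_iff₀ hcard]
  calc (W.map (fun w => (w - mmean W)^2)).sum ≤ (W.card : ℝ) * ((M-m)/2)^2 :=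
        le_trans key1 key2
    _ = ((M-m)/2)^2 * (W.card:ℝ) := by ring

lemma sum_range_cast (p : ℕ) : ∑ i ∈ Finset.range p, (i:ℝ) = p*(p-1)/2 := by
  induction p with
  | zero => simp
  | succ p ih => rw [Finset.sum_range_succ, ih]; push_cast; ring

lemma sum_range_sq_cast (p : ℕ) :
    ∑ i ∈ Finset.range p, (i:ℝ)^2 = p*(p-1)*(2*p-1)/6 := by
  induction p with
  | zero => simp
  | succ p ih => rw [Finset.sum_range_succ, ih]; push_cast; ring

lemma sum_sub_sq (p : ℕ) (a : ℕ → ℝ) :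
    ∑ i ∈ Finset.range p, ∑ j ∈ Finset.range p, (a i - a j)^2
      = 2*p*(∑ i ∈ Finset.range p, (a i)^2) - 2*(∑ i ∈ Finset.range p, a i)^2 := by
  have h : ∀ i j : ℕ, (a i - a j)^2 = (a i)^2 - 2*(a i)*(a j) + (a j)^2 := by
    intros; ring
  simp only [h, Finset.sum_add_distrib, Finset.sum_sub_distrib, ← Finset.mul_sum,
    Finset.sum_const, Finset.card_range, nsmul_eq_mul, ← Finset.sum_mul]
  ring

lemma double_idx (p : ℕ) :
    ∑ i ∈ Finset.range p, ∑ j ∈ Finset.range p, ((i:ℝ)-(j:ℝ))^2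
      = (p:ℝ)^2*((p:ℝ)^2-1)/6 := by
  rw [sum_sub_sq p (fun i => (i:ℝ)), sum_range_cast, sum_range_sq_cast]
  ring

lemma list_map_sum_eq (l : List ℝ) (f : ℝ → ℝ) :
    (l.map f).sum = ∑ i ∈ Finset.range l.length, f (l.getD i 0) := by
  induction l with
  | nil => simp
  | cons x l ih =>
    rw [List.map_cons, List.sum_cons, ih, List.length_cons, Finset.sum_range_succ']
    simp [List.getD_cons_succ, List.getD_cons_zero, add_comm]

lemma chain_gap (l : List ℝ) (g : ℝ) (hg : 0 ≤ g)
    (hc : l.Chain' (fun u v => u + g ≤ v)) :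
    ∀ i j : ℕ, i ≤ j → j < l.length → ((j : ℝ) - (i : ℝ)) * g ≤ l.getD j 0 - l.getD i 0 := by
  have hstep : ∀ i : ℕ, i + 1 < l.length → l.getD i 0 + g ≤ l.getD (i+1) 0 := by
    intro i hi
    have h := List.isChain_iff_getElem.1 hc i (by omega)
    rwa [List.getD_eq_getElem l 0 (by omega : i < l.length),
      List.getD_eq_getElem l 0 hi]
  intro i j hij hj
  induction j, hij using Nat.le_induction with
  | base => simp
  | succ j hij ih =>
    have hj' : j < l.length := by omega
    have h1 := ih hj'
    have h2 := hstep j hj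
    push_cast
    push_cast at h1
    linarith

lemma lower_bound (l : List ℝ) (c g : ℝ) (hg : 0 ≤ g)
    (hc : l.Chain' (fun u v => u + g ≤ v)) :
    g^2 * ((l.length:ℝ) * ((l.length:ℝ)^2 - 1)) / 12 ≤ (l.map (fun w => (w - c)^2)).sum := by
  set p := l.length with hp
  rcases Nat.eq_zero_or_pos p with h0 | hppos
  · rw [list_map_sum_eq, h0]
    simp only [Nat.cast_zero, zero_mul, mul_zero, zero_div]
    · apply Finset.sum_nonneg
      intro i _
      positivity
  set a : ℕ → ℝ := fun i => l.getD i 0 - c with ha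
  have hterm : ∀ i ∈ Finset.range p, ∀ j ∈ Finset.range p,
      ((i:ℝ)-(j:ℝ))^2 * g^2 ≤ (a i - a j)^2 := by
    intro i hi j hj
    rw [Finset.mem_range] at hi hj
    rcases le_total i j with h | h
    · have hgap := chain_gap l g hg hc i j h hj
      have hij : (i:ℝ) ≤ (j:ℝ) := by exact_mod_cast h
      have haij : a j - a i = l.getD j 0 - l.getD i 0 := by rw [ha]; ring
      nlinarith [mul_nonneg (sub_nonneg.2 hij) hg]
    · have hgap := chain_gap l g hg hc j i h hi
      have hij : (j:ℝ) ≤ (i:ℝ) := by exact_mod_cast h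
      have haij : a i - a j = l.getD i 0 - l.getD j 0 := by rw [ha]; ring
      nlinarith [mul_nonneg (sub_nonneg.2 hij) hg]
  have hsum : ∑ i ∈ Finset.range p, ∑ j ∈ Finset.range p, ((i:ℝ)-(j:ℝ))^2 * g^2
      ≤ ∑ i ∈ Finset.range p, ∑ j ∈ Finset.range p, (a i - a j)^2 := by
    apply Finset.sum_le_sum
    intro i hi
    exact Finset.sum_le_sum fun j hj => hterm i hi j hj
  have hL : ∑ i ∈ Finset.range p, ∑ j ∈ Finset.range p, ((i:ℝ)-(j:ℝ))^2 * g^2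
      = (p:ℝ)^2*((p:ℝ)^2-1)/6 * g^2 := by
    simp only [← Finset.sum_mul]
    rw [double_idx]
  have hR := sum_sub_sq p a
  have hmapsum : (l.map (fun w => (w - c)^2)).sum = ∑ i ∈ Finset.range p, (a i)^2 := by
    rw [list_map_sum_eq]
  rw [hmapsum]
  have hXone : (p:ℝ)^2*((p:ℝ)^2-1)/6 * g^2
      ≤ 2*p*(∑ i ∈ Finset.range p, (a i)^2) := by
    have := sq_nonneg (∑ i ∈ Finset.range p, a i)
    rw [hL, hR] at hsum
    linarith
  have hppos' : (0:ℝ) < (p:ℝ) := by exact_mod_cast hppos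
  have h2p : (0:ℝ) < 2*(p:ℝ) := by linarith
  have hm : g^2 * ((p:ℝ) * ((p:ℝ)^2 - 1)) / 12 * (2*(p:ℝ))
      = (p:ℝ)^2*((p:ℝ)^2-1)/6 * g^2 := by ring
  have hfin : g^2 * ((p:ℝ) * ((p:ℝ)^2 - 1)) / 12 * (2*(p:ℝ))
      ≤ (∑ i ∈ Finset.range p, (a i)^2) * (2*(p:ℝ)) := by
    rw [hm, show (∑ i ∈ Finset.range p, (a i)^2) * (2*(p:ℝ))
      = 2*(p:ℝ)*(∑ i ∈ Finset.range p, (a i)^2) from by ring]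
    exact hXone
  exact le_of_mul_le_mul_right hfin h2p

lemma dlv_key (β g : ℝ) (hβ : 0 < β) (hg : g = 2 * Real.sqrt β) :
    ∀ (xs : List ℝ) (V : Multiset ℝ) (z : ℝ), z ∈ V → (∀ a ∈ V, z ≤ a) →
      (∀ a ∈ V, ∀ b ∈ xs, a ≤ b) → xs.Pairwise (· ≤ ·) →
      ∃ zs : List ℝ, zs.length = (dlvAux β V xs).length ∧ zs.head? = some z ∧
        (∀ w ∈ zs, w ∈ V + ↑xs) ∧ zs.Chain' (fun u v => u + g ≤ v) := by
  intro xs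
  induction xs with
  | nil =>
    intro V z hz _ _ _
    refine ⟨[z], by simp [dlvAux], rfl, ?_, List.isChain_singleton z⟩
    intro w hw
    simp only [List.mem_singleton] at hw
    subst hw
    exact Multiset.mem_add.2 (Or.inl hz)
  | cons x xs ih =>
    intro V z hz hmin hVxs hsorted
    have hsorted' : xs.Pairwise (· ≤ ·) := (List.pairwise_cons.1 hsorted).2
    have hxxs : ∀ b ∈ xs, x ≤ b := (List.pairwise_cons.1 hsorted).1
    rw [dlvAux]
    split
    case isTrue h =>
      have harg : ∀ a ∈ ({x} : Multiset ℝ), ∀ b ∈ xs, a ≤ b := by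
        intro a ha b hb
        rw [Multiset.mem_singleton] at ha
        rw [ha]
        exact hxxs b hb
      obtain ⟨zs', hlen, hhead, hmem, hchain⟩ := ih {x} x (Multiset.mem_singleton_self x)
        (fun a ha => by rw [Multiset.mem_singleton] at ha; exact le_of_eq ha.symm)
        harg hsorted'
      have hzx : z ≤ x := hVxs z hz x List.mem_cons_self
      have hVlex : ∀ w ∈ x ::ₘ V, w ≤ x := by
        intro w hw
        rcases Multiset.mem_cons.1 hw with rfl | hw
        · exact le_rfl
        · exact hVxs w hw x List.mem_cons_self
      have hVgez : ∀ w ∈ x ::ₘ V, z ≤ w := by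
        intro w hw
        rcases Multiset.mem_cons.1 hw with rfl | hw
        · exact hzx
        · exact hmin w hw
      have hpop : mvar (x ::ₘ V) ≤ ((x - z)/2)^2 :=
        popoviciu _ (Multiset.cons_ne_zero) z x hVgez hVlex
      have hsq : β < ((x - z)/2)^2 := lt_of_lt_of_le h hpop
      have hpos : 0 < (x - z)/2 := by nlinarith
      have hsqrt : Real.sqrt β < (x - z)/2 := (Real.sqrt_lt' hpos).2 hsq
      have hgap : z + g ≤ x := by rw [hg]; linarith
      refine ⟨z :: zs', by simp [hlen], rfl, ?_, ?_⟩
      · intro w hw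
        rcases List.mem_cons.1 hw with rfl | hw
        · exact Multiset.mem_add.2 (Or.inl hz)
        · have hw' := hmem w hw
          rw [Multiset.mem_add] at hw' ⊢
          rcases hw' with h' | h'
          · rw [Multiset.mem_singleton] at h'
            subst h'
            exact Or.inr (by simp)
          · refine Or.inr ?_
            rw [Multiset.mem_coe] at h' ⊢
            exact List.mem_cons_of_mem x h'
      · refine List.isChain_cons.2 ⟨?_, hchain⟩
        intro b hb
        rw [hhead] at hb
        have hbx : b = x := by simpa using hb.symm
        rw [hbx]
        exact hgap
    case isFalse h =>
      have hzx : z ≤ x := hVxs z hz x List.mem_cons_self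
      obtain ⟨zs', hlen, hhead, hmem, hchain⟩ := ih (x ::ₘ V) z (Multiset.mem_cons_of_mem hz)
        (fun a ha => by
          rcases Multiset.mem_cons.1 ha with rfl | ha
          exacts [hzx, hmin a ha])
        (fun a ha b hb => by
          rcases Multiset.mem_cons.1 ha with rfl | ha
          exacts [hxxs b hb, hVxs a ha b (List.mem_cons_of_mem x hb)])
        hsorted'
      refine ⟨zs', hlen, hhead, ?_, hchain⟩
      intro w hw
      have hw' := hmem w hw
      rw [Multiset.mem_add] at hw' ⊢
      rcases hw' with h' | h'
      · rcases Multiset.mem_cons.1 h' with rfl | h''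
        · exact Or.inr (by simp)
        · exact Or.inl h''
      · refine Or.inr ?_
        rw [Multiset.mem_coe] at h' ⊢
        exact List.mem_cons_of_mem x h'

lemma length_le_card_sum : ∀ M : List (Multiset ℝ), (∀ B ∈ M, B ≠ 0) →
    M.length ≤ Multiset.card M.sum := by
  intro M
  induction M with
  | nil => simp
  | cons B M ih =>
    intro h
    rw [List.sum_cons, List.length_cons, Multiset.card_add]
    have h1 : 0 < Multiset.card B := Multiset.card_pos.2 (h B List.mem_cons_self)
    have h2 := ih (fun B' hB' => h B' (List.mem_cons_of_mem B hB'))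
    omega

lemma sum_map_mvar_le : ∀ (M : List (Multiset ℝ)) (β : ℝ), (∀ B ∈ M, mvar B ≤ β) →
    (M.map mvar).sum ≤ M.length * β := by
  intro M β
  induction M with
  | nil => simp
  | cons B M ih =>
    intro h
    rw [List.map_cons, List.sum_cons, List.length_cons]
    have h2 := ih (fun B' hB' => h B' (List.mem_cons_of_mem B hB'))
    have h1 := h B List.mem_cons_self
    push_cast
    linarith

set_option maxHeartbeats 1000000 in
theorem stmt10 (n : ℕ) (hn : 2 ≤ n) (S : Multiset ℝ) (hcard : S.card = n)
    (hvar : 0 < mvar S) :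
    (dlv (24 * mvar S / (n : ℝ) ^ 2) S).sum = S ∧
    ((dlv (24 * mvar S / (n : ℝ) ^ 2) S).length : ℝ) ≤ (3 / 4) * n + 1 / 2 ∧
    ((dlv (24 * mvar S / (n : ℝ) ^ 2) S).map mvar).sum / mvar S ≤ 24 / n := by
  have hN2 : (2:ℝ) ≤ (n:ℝ) := by exact_mod_cast hn
  have hn0 : (0:ℝ) < (n:ℝ) := by linarith
  set σ2 := mvar S with hσ2
  set β : ℝ := 24 * σ2 / (n:ℝ)^2 with hβdef
  have hβpos : 0 < β := by
    rw [hβdef]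
    apply div_pos (by linarith) (by positivity)
  set g : ℝ := 2 * Real.sqrt β with hgdef
  rcases hsort : S.sort (· ≤ ·) with _ | ⟨x, xs⟩
  · exfalso
    have hl := Multiset.length_sort (α := ℝ) (· ≤ ·) (s := S)
    rw [hsort] at hl
    simp at hl
    rw [hcard] at hl
    omega
  have hdlv : dlv β S = dlvAux β {x} xs := by
    unfold dlv
    rw [hsort]
  have hsorted := Multiset.pairwise_sort S (· ≤ ·)
  rw [hsort] at hsorted
  have hxxs : ∀ b ∈ xs, x ≤ b := (List.pairwise_cons.1 hsorted).1
  have hsorted' : xs.Pairwise (· ≤ ·) := (List.pairwise_cons.1 hsorted).2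
  have hcoe : ({x} : Multiset ℝ) + ↑xs = S := by
    have h1 : ((x :: xs : List ℝ) : Multiset ℝ) = S := by
      rw [← hsort, Multiset.sort_eq]
    rw [Multiset.singleton_add, Multiset.cons_coe, h1]
  -- part 1
  have hsum : (dlv β S).sum = S := by rw [hdlv, dlvAux_sum β xs {x}, hcoe]
  set L := dlv β S with hL
  have hblocks : ∀ B ∈ L, B ≠ 0 ∧ mvar B ≤ β := by
    rw [hdlv]
    exact dlvAux_blocks β hβpos.le xs {x} (by simp)
      (by rw [mvar_singleton]; exact hβpos.le)
  have hp_le_n : L.length ≤ n := by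
    have h1 := length_le_card_sum L (fun B hB => (hblocks B hB).1)
    rw [hsum, hcard] at h1
    exact h1
  -- part 3
  have hratio : ((L.map mvar).sum) / σ2 ≤ 24 / n := by
    have h1 : (L.map mvar).sum ≤ (L.length : ℝ) * β :=
      sum_map_mvar_le L β (fun B hB => (hblocks B hB).2)
    have h2 : (L.length : ℝ) * β ≤ (n:ℝ) * β := by
      apply mul_le_mul_of_nonneg_right _ hβpos.le
      exact_mod_cast hp_le_n
    have h3 : (L.map mvar).sum / σ2 ≤ ((n:ℝ) * β) / σ2 := by
      gcongr
      linarith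
    have h4 : ((n:ℝ) * β)/σ2 = 24 / n := by
      rw [hβdef]
      field_simp
    rw [h4] at h3
    exact h3
  -- part 2
  obtain ⟨zs, hlen, hhead, hmem, hchain⟩ := dlv_key β g hβpos hgdef xs {x} x
    (Multiset.mem_singleton_self x)
    (fun a ha => by rw [Multiset.mem_singleton] at ha; exact le_of_eq ha.symm)
    (fun a ha b hb => by
      rw [Multiset.mem_singleton] at ha; rw [ha]; exact hxxs b hb)
    hsorted'
  have hmemS : ∀ w ∈ zs, w ∈ S := fun w hw => by
    have := hmem w hw
    rwa [hcoe] at this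
  have hgpos : 0 < g := by
    rw [hgdef]
    have := Real.sqrt_pos.2 hβpos
    linarith
  have hnodup : zs.Nodup := by
    have hlt : zs.Chain' (· < ·) := hchain.imp (fun {a b} h => by linarith)
    exact List.Pairwise.imp (fun h => ne_of_lt h) (List.isChain_iff_pairwise.1 hlt)
  have hsub : (↑zs : Multiset ℝ) ≤ S := by
    rw [Multiset.le_iff_count]
    intro a
    by_cases ha : a ∈ zs
    · have h1 : Multiset.count a ↑zs ≤ 1 :=
        Multiset.nodup_iff_count_le_one.1 ((Multiset.coe_nodup).2 hnodup) a
      have h2 : 1 ≤ Multiset.count a S := Multiset.one_le_count_iff_mem.2 (hmemS a ha)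
      omega
    · rw [Multiset.count_eq_zero.2 (by simpa using ha)]
      exact Nat.zero_le _
  set c := mmean S with hc
  have hcards : (S.card : ℝ) = (n:ℝ) := by rw [hcard]
  have hSsum : (S.map (fun w => (w - c)^2)).sum = σ2 * n := by
    have hσ : σ2 = (S.map (fun w => (w - c)^2)).sum / (n:ℝ) := by
      rw [hσ2]
      unfold mvar
      rw [hcards, hc]
    rw [hσ]
    field_simp
  have hmono : ((↑zs : Multiset ℝ).map (fun w => (w - c)^2)).sum
      ≤ (S.map (fun w => (w - c)^2)).sum := by
    obtain ⟨u, hu⟩ := Multiset.le_iff_exists_add.1 hsub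
    rw [hu, Multiset.map_add, Multiset.sum_add]
    have h0 : 0 ≤ (u.map (fun w => (w - c)^2)).sum := by
      apply Multiset.sum_nonneg
      intro y hy
      obtain ⟨w, _, rfl⟩ := Multiset.mem_map.1 hy
      positivity
    linarith
  have hlist : ((↑zs : Multiset ℝ).map (fun w => (w - c)^2)).sum
      = (zs.map (fun w => (w - c)^2)).sum := by
    simp
  have hlower := lower_bound zs c g hgpos.le hchain
  set P : ℝ := (L.length : ℝ) with hP
  have hPzs : (zs.length : ℝ) = P := by
    rw [hP, hdlv, hlen]
  rw [hPzs] at hlower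
  have hkey : g^2 * (P * (P^2 - 1)) / 12 ≤ σ2 * n := by
    rw [hlist] at hmono
    linarith
  have hg2 : g^2 = 4 * β := by
    rw [hgdef, mul_pow, Real.sq_sqrt hβpos.le]
    ring
  have hn2 : (0:ℝ) < (n:ℝ)^2 := by positivity
  have hX : P * (P^2 - 1) ≤ (n:ℝ)^3 / 8 := by
    rw [hg2, hβdef] at hkey
    have hkey' : 8 * σ2 * (P*(P^2-1)) ≤ σ2 * (n:ℝ) * (n:ℝ)^2 := by
      have hmul := mul_le_mul_of_nonneg_right hkey (le_of_lt hn2)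
      calc 8 * σ2 * (P*(P^2-1))
          = (4 * (24*σ2/(n:ℝ)^2) * (P*(P^2-1))/12) * (n:ℝ)^2 := by
            field_simp
            ring
        _ ≤ σ2 * (n:ℝ) * (n:ℝ)^2 := hmul
    nlinarith [hkey', hvar]
  have hp1 : (1:ℝ) ≤ P := by
    rw [hP, hdlv]
    exact_mod_cast dlvAux_length_pos β xs {x}
  have hpart2 : P ≤ 3/4 * (n:ℝ) + 1/2 := by
    by_contra hcon
    push_neg at hcon
    have ht2 : (2:ℝ) ≤ 3/4 * (n:ℝ) + 1/2 := by linarith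
    have hP2 : (2:ℝ) < P := lt_of_le_of_lt ht2 hcon
    have hstep1 : (n:ℝ)^3/8 < (3/4*(n:ℝ)+1/2)^3 - (3/4*(n:ℝ)+1/2) := by
      nlinarith [hN2, mul_nonneg (sq_nonneg (n:ℝ)) (by linarith : (0:ℝ) ≤ (n:ℝ) - 2),
        mul_nonneg (by linarith : (0:ℝ) ≤ (n:ℝ)) (by linarith : (0:ℝ) ≤ (n:ℝ) - 2)]
    have hstep2 : (3/4*(n:ℝ)+1/2)^3 - (3/4*(n:ℝ)+1/2) < P^3 - P := by
      have hq : (0:ℝ) < P^2 + P*(3/4*(n:ℝ)+1/2) + (3/4*(n:ℝ)+1/2)^2 - 1 := by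
        nlinarith [hP2, ht2]
      nlinarith [mul_pos (sub_pos.2 hcon) hq]
    have hPP : P*(P^2-1) = P^3 - P := by ring
    linarith [hX, hstep1, hstep2]
  refine ⟨hsum, by linarith, hratio⟩
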